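/- arXiv:2402.15603 — 7 statements merged into one kernel-verified Lean document; each statement's English description precedes it below -/
import Mathlib

section
/- Let h₀*, h₁*, ĥ₀, ĥ₁ : 𝒳 → {0,1} be measurable classifiers and let γ ≥ 0. If the pair (ĥ₀, ĥ₁) satisfies γ-statistical parity, i.e. |μ₀({ĥ₀ = 1}) − μ₁({ĥ₁ = 1})| ≤ γ, then μ₀({x : ĥ₀(x) ≠ h₀*(x)}) + μ₁({x : ĥ₁(x) ≠ h₁*(x)}) ≥ |μ₀({h₀* = 1}) − μ₁({h₁* = 1})| − γ. -/
open MeasureTheory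

lemma abs_diff_le_neq {𝒳 : Type*} [MeasurableSpace 𝒳]
    (μ : Measure 𝒳) [IsProbabilityMeasure μ]
    (g h : 𝒳 → Bool) :
    |(μ {x | g x = true}).toReal - (μ {x | h x = true}).toReal| ≤
      (μ {x | g x ≠ h x}).toReal := by
  have hfin : ∀ s : Set 𝒳, μ s ≠ ⊤ := fun s => measure_ne_top μ s
  have key : ∀ (a b : 𝒳 → Bool),
      (μ {x | a x = true}).toReal - (μ {x | b x = true}).toReal ≤
        (μ {x | a x ≠ b x}).toReal := by
    intro a b
    have hsub : {x | a x = true} ⊆ {x | b x = true} ∪ {x | a x ≠ b x} := by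
      intro x hx
      by_cases hb : b x = true
      · exact Or.inl hb
      · exact Or.inr (by simp [Set.mem_setOf_eq, hx, hb]; exact hx)
    have := measure_union_le (μ := μ) {x | b x = true} {x | a x ≠ b x}
    have h1 : μ {x | a x = true} ≤ μ {x | b x = true} + μ {x | a x ≠ b x} :=
      le_trans (measure_mono hsub) this
    have h2 : (μ {x | a x = true}).toReal ≤
        (μ {x | b x = true}).toReal + (μ {x | a x ≠ b x}).toReal := by
      have := ENNReal.toReal_mono (by
        exact ENNReal.add_ne_top.mpr ⟨hfin _, hfin _⟩) h1
      rwa [ENNReal.toReal_add (hfin _) (hfin _)] at this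
    linarith
  have h1 := key g h
  have h2 := key h g
  have hcomm : {x | h x ≠ g x} = {x | g x ≠ h x} := by
    ext x; simp [ne_comm]
  rw [hcomm] at h2
  exact abs_sub_le_iff.mpr ⟨h1, h2⟩

/-- **Proposition 1.** If the pair of classifiers `(g₀, g₁)` satisfies `γ`-statistical parity,
then the sum of prediction-change probabilities relative to `(h₀, h₁)` is at least
`|μ₀({h₀ = 1}) − μ₁({h₁ = 1})| − γ`. -/
theorem prediction_change_lower_bound
    {𝒳 : Type*} [MeasurableSpace 𝒳] [Nonempty 𝒳]
    (μ₀ μ₁ : Measure 𝒳) [IsProbabilityMeasure μ₀] [IsProbabilityMeasure μ₁]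
    (h₀ h₁ g₀ g₁ : 𝒳 → Bool)
    (hh₀ : Measurable h₀) (hh₁ : Measurable h₁)
    (hg₀ : Measurable g₀) (hg₁ : Measurable g₁)
    (γ : ℝ) (hγ : 0 ≤ γ)
    (hpar : |(μ₀ {x | g₀ x = true}).toReal - (μ₁ {x | g₁ x = true}).toReal| ≤ γ) :
    (μ₀ {x | g₀ x ≠ h₀ x}).toReal + (μ₁ {x | g₁ x ≠ h₁ x}).toReal ≥
      |(μ₀ {x | h₀ x = true}).toReal - (μ₁ {x | h₁ x = true}).toReal| - γ := by
  have a0 := abs_diff_le_neq μ₀ g₀ h₀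
  have a1 := abs_diff_le_neq μ₁ g₁ h₁
  set p0 := (μ₀ {x | h₀ x = true}).toReal
  set p1 := (μ₁ {x | h₁ x = true}).toReal
  set q0 := (μ₀ {x | g₀ x = true}).toReal
  set q1 := (μ₁ {x | g₁ x = true}).toReal
  have tri : |p0 - p1| ≤ |q0 - p0| + |q0 - q1| + |q1 - p1| := by
    have := abs_sub_abs_le_abs_sub (p0 - p1) 0
    calc |p0 - p1| = |(p0 - q0) + (q0 - q1) + (q1 - p1)| := by ring_nf
      _ ≤ |p0 - q0| + |q0 - q1| + |q1 - p1| := by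
          exact le_trans (abs_add_le _ _) (by gcongr; exact abs_add_le _ _)
      _ = |q0 - p0| + |q0 - q1| + |q1 - p1| := by rw [abs_sub_comm p0 q0]
  linarith
end

section
/- Let h₀, h₁ : 𝒳 → {0,1} be measurable classifiers, α := μ₀({h₀ = 1}) and β := μ₁({h₁ = 1}), and assume 0 < α, β < 1, and β ≤ α. Then (μ₀ ⊗ U){(x,s) : h₀(x) = 1 and s ≤ (α+β)/(2α)} = (α+β)/2 and (μ₁ ⊗ U){(x,s) : h₁(x) = 1, or h₁(x) = 0 and s ≤ (α−β)/(2(1−β))} = (α+β)/2; consequently the classifier h*_Fair produced by Algorithm 1 has statistical parity gap equal to 0. -/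
open MeasureTheory

lemma uniform_Iic (c : ℝ) (h1 : c ≤ 1) :
    (volume.restrict (Set.Icc (0:ℝ) 1)) (Set.Iic c) = ENNReal.ofReal c := by
  rw [Measure.restrict_apply measurableSet_Iic]
  have : Set.Iic c ∩ Set.Icc (0:ℝ) 1 = Set.Icc 0 c := by
    ext x; constructor
    · rintro ⟨hx, hx0, hx1⟩; exact ⟨hx0, hx⟩
    · rintro ⟨hx0, hxc⟩; exact ⟨hxc, hx0, le_trans hxc h1⟩
  rw [this, Real.volume_Icc, sub_zero]

lemma prod_strip {𝒳 : Type*} [MeasurableSpace 𝒳] (μ : Measure 𝒳) [IsProbabilityMeasure μ]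
    (S : Set 𝒳) (c : ℝ) (h0 : 0 ≤ c) (h1 : c ≤ 1) :
    ((μ.prod (volume.restrict (Set.Icc (0:ℝ) 1))) (S ×ˢ Set.Iic c)).toReal
      = (μ S).toReal * c := by
  rw [Measure.prod_prod, uniform_Iic c h1, ENNReal.toReal_mul, ENNReal.toReal_ofReal h0]

/-- **Theorem 1 (fairness part).** The two group-wise acceptance probabilities of the
classifier `h*_Fair` produced by Algorithm 1 both equal `(α+β)/2`, hence its statistical
parity gap is `0`. Here `U` is the uniform measure on `[0,1]` modelling the independent
randomization `s`. -/
theorem algorithm1_statistical_parity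
    {𝒳 : Type*} [MeasurableSpace 𝒳] [Nonempty 𝒳]
    (μ₀ μ₁ : Measure 𝒳) [IsProbabilityMeasure μ₀] [IsProbabilityMeasure μ₁]
    (h₀ h₁ : 𝒳 → Bool) (hm₀ : Measurable h₀) (hm₁ : Measurable h₁)
    (α β : ℝ)
    (hα : α = (μ₀ {x | h₀ x = true}).toReal)
    (hβ : β = (μ₁ {x | h₁ x = true}).toReal)
    (hα0 : 0 < α) (hα1 : α < 1) (hβ0 : 0 < β) (hβ1 : β < 1) (hle : β ≤ α) :
    ((μ₀.prod (volume.restrict (Set.Icc (0:ℝ) 1)))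
        {p : 𝒳 × ℝ | h₀ p.1 = true ∧ p.2 ≤ (α + β) / (2 * α)}).toReal = (α + β) / 2 ∧
    ((μ₁.prod (volume.restrict (Set.Icc (0:ℝ) 1)))
        {p : 𝒳 × ℝ | h₁ p.1 = true ∨
          (h₁ p.1 = false ∧ p.2 ≤ (α - β) / (2 * (1 - β)))}).toReal = (α + β) / 2 ∧
    |((μ₀.prod (volume.restrict (Set.Icc (0:ℝ) 1)))
        {p : 𝒳 × ℝ | h₀ p.1 = true ∧ p.2 ≤ (α + β) / (2 * α)}).toReal -
      ((μ₁.prod (volume.restrict (Set.Icc (0:ℝ) 1)))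
        {p : 𝒳 × ℝ | h₁ p.1 = true ∨
          (h₁ p.1 = false ∧ p.2 ≤ (α - β) / (2 * (1 - β)))}).toReal| = 0 := by
  have hS₀ : MeasurableSet {x | h₀ x = true} := hm₀ (MeasurableSet.singleton true)
  have hS₁ : MeasurableSet {x | h₁ x = true} := hm₁ (MeasurableSet.singleton true)
  set c₀ : ℝ := (α + β) / (2 * α) with hc₀
  set c₁ : ℝ := (α - β) / (2 * (1 - β)) with hc₁
  have hc₀0 : 0 ≤ c₀ := by positivity
  have hc₀1 : c₀ ≤ 1 := by
    rw [div_le_one (by positivity)]; linarith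
  have h1β : 0 < 1 - β := by linarith
  have hc₁0 : 0 ≤ c₁ := by
    apply div_nonneg <;> linarith
  have hc₁1 : c₁ ≤ 1 := by
    rw [div_le_one (by positivity)]; linarith
  have e₀ : {p : 𝒳 × ℝ | h₀ p.1 = true ∧ p.2 ≤ c₀}
      = ({x | h₀ x = true} ×ˢ Set.Iic c₀) := by
    ext ⟨x, s⟩; simp [Set.mem_prod]
  have part1 : ((μ₀.prod (volume.restrict (Set.Icc (0:ℝ) 1)))
      {p : 𝒳 × ℝ | h₀ p.1 = true ∧ p.2 ≤ c₀}).toReal = (α + β) / 2 := by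
    rw [e₀, prod_strip μ₀ _ c₀ hc₀0 hc₀1, ← hα, hc₀]
    field_simp
  have hcompl : {x | h₁ x = false} = {x | h₁ x = true}ᶜ := by
    ext x; simp
  have hμcompl : (μ₁ {x | h₁ x = false}).toReal = 1 - β := by
    rw [hcompl, prob_compl_eq_one_sub hS₁, hβ,
      ENNReal.toReal_sub_of_le prob_le_one (by simp)]
    simp
  have e₁ : {p : 𝒳 × ℝ | h₁ p.1 = true ∨ (h₁ p.1 = false ∧ p.2 ≤ c₁)}
      = ({x | h₁ x = true} ×ˢ (Set.univ : Set ℝ)) ∪ ({x | h₁ x = false} ×ˢ Set.Iic c₁) := by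
    ext ⟨x, s⟩; simp [Set.mem_prod]
  have hdisj : Disjoint ({x | h₁ x = true} ×ˢ (Set.univ : Set ℝ))
      ({x | h₁ x = false} ×ˢ Set.Iic c₁) := by
    rw [Set.disjoint_left]
    rintro ⟨x, s⟩ ⟨hx, -⟩ ⟨hx', -⟩
    simp only [Set.mem_setOf_eq] at hx hx'
    rw [hx] at hx'; exact Bool.noConfusion hx'
  have hmeas2 : MeasurableSet ({x | h₁ x = false} ×ˢ Set.Iic c₁) :=
    (hcompl ▸ hS₁.compl).prod measurableSet_Iic
  have part2 : ((μ₁.prod (volume.restrict (Set.Icc (0:ℝ) 1)))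
      {p : 𝒳 × ℝ | h₁ p.1 = true ∨ (h₁ p.1 = false ∧ p.2 ≤ c₁)}).toReal = (α + β) / 2 := by
    rw [e₁, measure_union hdisj hmeas2, ENNReal.toReal_add (measure_ne_top _ _) (measure_ne_top _ _)]
    have t1 : ((μ₁.prod (volume.restrict (Set.Icc (0:ℝ) 1)))
        ({x | h₁ x = true} ×ˢ (Set.univ : Set ℝ))).toReal = β := by
      rw [Measure.prod_prod, Measure.restrict_apply MeasurableSet.univ, Set.univ_inter,
        Real.volume_Icc]
      simp [hβ]
    have t2 := prod_strip μ₁ {x | h₁ x = false} c₁ hc₁0 hc₁1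
    rw [t1, t2, hμcompl, hc₁]
    field_simp
    ring
  refine ⟨part1, part2, ?_⟩
  rw [part1, part2, sub_self, abs_zero]
end

section
/- Let h₀, h₁ : 𝒳 → {0,1} be measurable classifiers, α := μ₀({h₀ = 1}) and β := μ₁({h₁ = 1}), and assume 0 < α, β < 1, and β ≤ α. Then (μ₀ ⊗ U){(x,s) : h₀(x) = 1 and s > (α+β)/(2α)} = (α−β)/2 and (μ₁ ⊗ U){(x,s) : h₁(x) = 0 and s ≤ (α−β)/(2(1−β))} = (α−β)/2; hence the sum of the two prediction-change probabilities of Algorithm 1's classifier h*_Fair relative to h₀ and h₁ equals |μ₀({h₀ = 1}) − μ₁({h₁ = 1})|, attaining the lower bound of Proposition 1 with γ = 0. -/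
open MeasureTheory

/-- **Theorem 1 (optimality part).** The two group-wise prediction-change probabilities of
the classifier `h*_Fair` produced by Algorithm 1 relative to `h₀` and `h₁` both equal
`(α−β)/2`, hence their sum equals `|μ₀({h₀ = 1}) − μ₁({h₁ = 1})|`, attaining the lower
bound of Proposition 1 with `γ = 0`. -/
theorem algorithm1_optimality
    {𝒳 : Type*} [MeasurableSpace 𝒳] [Nonempty 𝒳]
    (μ₀ μ₁ : Measure 𝒳) [IsProbabilityMeasure μ₀] [IsProbabilityMeasure μ₁]
    (h₀ h₁ : 𝒳 → Bool) (hm₀ : Measurable h₀) (hm₁ : Measurable h₁)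
    (α β : ℝ)
    (hα : α = (μ₀ {x | h₀ x = true}).toReal)
    (hβ : β = (μ₁ {x | h₁ x = true}).toReal)
    (hα0 : 0 < α) (hα1 : α < 1) (hβ0 : 0 < β) (hβ1 : β < 1) (hle : β ≤ α) :
    ((μ₀.prod (volume.restrict (Set.Icc (0:ℝ) 1)))
        {p : 𝒳 × ℝ | h₀ p.1 = true ∧ (α + β) / (2 * α) < p.2}).toReal = (α - β) / 2 ∧
    ((μ₁.prod (volume.restrict (Set.Icc (0:ℝ) 1)))
        {p : 𝒳 × ℝ | h₁ p.1 = false ∧ p.2 ≤ (α - β) / (2 * (1 - β))}).toReal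
      = (α - β) / 2 ∧
    ((μ₀.prod (volume.restrict (Set.Icc (0:ℝ) 1)))
        {p : 𝒳 × ℝ | h₀ p.1 = true ∧ (α + β) / (2 * α) < p.2}).toReal +
      ((μ₁.prod (volume.restrict (Set.Icc (0:ℝ) 1)))
        {p : 𝒳 × ℝ | h₁ p.1 = false ∧ p.2 ≤ (α - β) / (2 * (1 - β))}).toReal
      = |(μ₀ {x | h₀ x = true}).toReal - (μ₁ {x | h₁ x = true}).toReal| := by
  set c : ℝ := (α + β) / (2 * α) with hc
  set d : ℝ := (α - β) / (2 * (1 - β)) with hd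
  have hc0 : 0 ≤ c := by positivity
  have hc1 : c ≤ 1 := by
    rw [hc, div_le_one (by linarith)]; linarith
  have hd0 : 0 ≤ d := by
    apply div_nonneg <;> linarith
  have hd1 : d ≤ 1 := by
    rw [hd, div_le_one (by linarith)]; linarith
  -- first set as a product set
  have hset0 : {p : 𝒳 × ℝ | h₀ p.1 = true ∧ c < p.2}
      = {x | h₀ x = true} ×ˢ Set.Ioi c := by
    ext p; simp [Set.mem_prod, Set.mem_Ioi]
  have hset1 : {p : 𝒳 × ℝ | h₁ p.1 = false ∧ p.2 ≤ d}
      = {x | h₁ x = false} ×ˢ Set.Iic d := by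
    ext p; simp [Set.mem_prod, Set.mem_Iic]
  have hres0 : (volume.restrict (Set.Icc (0:ℝ) 1)) (Set.Ioi c)
      = ENNReal.ofReal (1 - c) := by
    rw [Measure.restrict_apply measurableSet_Ioi]
    have : Set.Ioi c ∩ Set.Icc (0:ℝ) 1 = Set.Ioc c 1 := by
      ext s; simp only [Set.mem_inter_iff, Set.mem_Ioi, Set.mem_Icc, Set.mem_Ioc]
      constructor
      · rintro ⟨h1, _, h3⟩; exact ⟨h1, h3⟩
      · rintro ⟨h1, h2⟩; exact ⟨h1, le_trans hc0 h1.le, h2⟩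
    rw [this, Real.volume_Ioc]
  have hres1 : (volume.restrict (Set.Icc (0:ℝ) 1)) (Set.Iic d)
      = ENNReal.ofReal d := by
    rw [Measure.restrict_apply measurableSet_Iic]
    have : Set.Iic d ∩ Set.Icc (0:ℝ) 1 = Set.Icc 0 d := by
      ext s; simp only [Set.mem_inter_iff, Set.mem_Iic, Set.mem_Icc]
      constructor
      · rintro ⟨h1, h2, _⟩; exact ⟨h2, h1⟩
      · rintro ⟨h1, h2⟩; exact ⟨h2, h1, le_trans h2 hd1⟩
    rw [this, Real.volume_Icc, sub_zero]
  have hfin0 : μ₀ {x | h₀ x = true} ≠ ⊤ := measure_ne_top _ _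
  have hfalse : {x | h₁ x = false} = {x | h₁ x = true}ᶜ := by
    ext x; simp
  have hcm : MeasurableSet {x : 𝒳 | h₁ x = true} := hm₁ (measurableSet_singleton true)
  have hβval : (μ₁ {x | h₁ x = false}).toReal = 1 - β := by
    rw [hfalse, measure_compl hcm (measure_ne_top _ _),
      measure_univ, ENNReal.toReal_sub_of_le (prob_le_one) (by simp), ENNReal.toReal_one, hβ]
  have key0 : ((μ₀.prod (volume.restrict (Set.Icc (0:ℝ) 1)))
      {p : 𝒳 × ℝ | h₀ p.1 = true ∧ c < p.2}).toReal = (α - β) / 2 := by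
    rw [hset0, Measure.prod_prod, hres0, ENNReal.toReal_mul, ENNReal.toReal_ofReal (by linarith),
      ← hα]
    rw [hc]
    field_simp
    ring
  have key1 : ((μ₁.prod (volume.restrict (Set.Icc (0:ℝ) 1)))
      {p : 𝒳 × ℝ | h₁ p.1 = false ∧ p.2 ≤ d}).toReal = (α - β) / 2 := by
    rw [hset1, Measure.prod_prod, hres1, ENNReal.toReal_mul, ENNReal.toReal_ofReal hd0,
      hβval, hd]
    have h1β : (1:ℝ) - β ≠ 0 := by linarith
    field_simp
  refine ⟨key0, key1, ?_⟩
  rw [key0, key1, ← hα, ← hβ, abs_of_nonneg (by linarith)]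
  ring
end

section
/- Let b₀, b₁ > 0 and η₀, η₁ ∈ (0,1]. Then (Lap(b₀) ⊗ Lap(b₁)){(l₀,l₁) ∈ ℝ² : G(l₀,l₁) > b₀·log(1/η₀) + b₁·log(1/η₁)} ≤ η₀ + η₁. (Fairness guarantee of Theorem 2: with probability at least 1 − η₀ − η₁ over the independent Laplace noises, the statistical parity gap of Algorithm 2's classifier is at most log(1/η₀)/(n₀ε₂) + log(1/η₁)/(n₁ε₃), where b₀ = 1/(n₀ε₂) and b₁ = 1/(n₁ε₃).) -/
open MeasureTheory

/-- The Laplace distribution on `ℝ` with scale `b`. -/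
noncomputable def Lap (b : ℝ) : Measure ℝ :=
  volume.withDensity fun x => ENNReal.ofReal ((2 * b)⁻¹ * Real.exp (-|x| / b))

/-- Projection onto `[0,1]`. -/
noncomputable def clip (x : ℝ) : ℝ := min (max x 0) 1

/-- The statistical parity gap of Algorithm 2's classifier as a function of the Laplace
noise realizations `(l₀, l₁)`, with clipped perturbed rates `α̃ = [α+l₀]₀¹`,
`β̃ = [β+l₁]₀¹` (division by zero yields `0`, as in Lean's convention). -/
noncomputable def G (α β l₀ l₁ : ℝ) : ℝ :=
  let αt := clip (α + l₀)
  let βt := clip (β + l₁)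
  if βt ≤ αt then
    |α * (αt + βt) / (2 * αt) - β - (1 - β) * (αt - βt) / (2 * (1 - βt))|
  else
    |β * (αt + βt) / (2 * βt) - α - (1 - α) * (βt - αt) / (2 * (1 - αt))|

/-!
Both clipped rates are within the noise of the true ones, `|α - α̃| ≤ |l₀|` and
`|β - β̃| ≤ |l₁|`, since clipping to `[0,1]` is `1`-Lipschitz and fixes `α, β`. In the branch
`β̃ ≤ α̃` the gap equals `(α - α̃) c₀ + (β - β̃) c₁` with `|c₀|, |c₁| ≤ 1` (the other branch is
symmetric), so `G ≤ |l₀| + |l₁|`. A union bound and the Laplace tail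
`P(|L| > b log (1/η)) = η` finish the proof.
-/

open Set Real

lemma clip_mem_Icc (x : ℝ) : clip x ∈ Icc (0 : ℝ) 1 :=
  ⟨le_min (le_max_right x 0) zero_le_one, min_le_right _ _⟩

lemma clip_eq_self {x : ℝ} (hx : x ∈ Icc (0 : ℝ) 1) : clip x = x := by
  simp [clip, max_eq_left hx.1, min_eq_left hx.2]

lemma abs_clip_sub_clip_le (x y : ℝ) : |clip x - clip y| ≤ |x - y| :=
  calc |clip x - clip y| ≤ max |max x 0 - max y 0| |(1 : ℝ) - 1| :=
        abs_min_sub_min_le_max _ _ _ _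
    _ = |max x 0 - max y 0| := by simp
    _ ≤ |x - y| := abs_max_sub_max_le_abs _ _ _

lemma abs_sub_clip_add_le {x : ℝ} (hx : x ∈ Icc (0 : ℝ) 1) (l : ℝ) :
    |x - clip (x + l)| ≤ |l| := by
  simpa [clip_eq_self hx] using abs_clip_sub_clip_le x (x + l)

noncomputable def parityGap (α β a b : ℝ) : ℝ :=
  α * (a + b) / (2 * a) - β - (1 - β) * (a - b) / (2 * (1 - b))

lemma G_eq (α β l₀ l₁ : ℝ) : G α β l₀ l₁ =
    if clip (β + l₁) ≤ clip (α + l₀) then |parityGap α β (clip (α + l₀)) (clip (β + l₁))|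
    else |parityGap β α (clip (β + l₁)) (clip (α + l₀))| := by
  simp only [G, parityGap, add_comm (clip (β + l₁))]

section parityGap

variable {α β a b : ℝ}

/-- Thanks to `x / 0 = 0`, this also holds in the degenerate cases `a = b = 0` and `a = b = 1`. -/
lemma parityGap_eq (ha : a ∈ Icc (0 : ℝ) 1) (hb : b ∈ Icc (0 : ℝ) 1) (hba : b ≤ a) :
    parityGap α β a b =
      (α - a) * ((a + b) / (2 * a)) + (β - b) * ((a - b) / (2 * (1 - b)) - 1) := by
  unfold parityGap
  rcases ha.1.eq_or_lt with rfl | ha₀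
  · obtain rfl : b = 0 := le_antisymm hba hb.1
    simp
  rcases hb.2.eq_or_lt with rfl | hb₁
  · obtain rfl : a = 1 := le_antisymm ha.2 hba
    norm_num
  have : 1 - b ≠ 0 := by linarith
  field_simp
  ring

lemma abs_parityGap_le (ha : a ∈ Icc (0 : ℝ) 1) (hb : b ∈ Icc (0 : ℝ) 1) (hba : b ≤ a) :
    |parityGap α β a b| ≤ |α - a| + |β - b| := by
  have hc₀ : |(a + b) / (2 * a)| ≤ 1 := by
    rw [abs_of_nonneg (div_nonneg (by linarith [hb.1]) (by linarith [ha.1]))]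
    exact div_le_one_of_le₀ (by linarith) (by linarith [ha.1])
  have hc₁ : |(a - b) / (2 * (1 - b)) - 1| ≤ 1 := by
    have h₀ : 0 ≤ (a - b) / (2 * (1 - b)) := div_nonneg (by linarith) (by linarith [hb.2])
    have h₂ : (a - b) / (2 * (1 - b)) ≤ 2 :=
      div_le_of_le_mul₀ (by linarith [hb.2]) zero_le_two (by linarith [ha.2, hb.2])
    rw [abs_le]; constructor <;> linarith
  rw [parityGap_eq ha hb hba]
  calc _ ≤ |α - a| * |(a + b) / (2 * a)| + |β - b| * |(a - b) / (2 * (1 - b)) - 1| :=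
        (abs_add_le _ _).trans_eq (by rw [abs_mul, abs_mul])
    _ ≤ |α - a| + |β - b| := by
        gcongr ?_ + ?_ <;> exact mul_le_of_le_one_right (abs_nonneg _) ‹_›

end parityGap

lemma G_le_abs_add_abs {α β : ℝ} (hα : α ∈ Icc (0 : ℝ) 1) (hβ : β ∈ Icc (0 : ℝ) 1)
    (l₀ l₁ : ℝ) : G α β l₀ l₁ ≤ |l₀| + |l₁| := by
  have h₀ := abs_sub_clip_add_le hα l₀
  have h₁ := abs_sub_clip_add_le hβ l₁
  rw [G_eq]
  split_ifs with h
  · exact (abs_parityGap_le (clip_mem_Icc _) (clip_mem_Icc _) h).trans (add_le_add h₀ h₁)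
  · exact (abs_parityGap_le (clip_mem_Icc _) (clip_mem_Icc _) (not_le.1 h).le).trans
      ((add_le_add h₁ h₀).trans_eq (add_comm _ _))

lemma measure_prod_lt_add_le {X Y : Type*} [MeasurableSpace X] [MeasurableSpace Y]
    {μ : Measure X} {ν : Measure Y} [IsProbabilityMeasure μ] [IsProbabilityMeasure ν]
    (f : X → ℝ) (g : Y → ℝ) (s t : ℝ) :
    μ.prod ν {p | s + t < f p.1 + g p.2} ≤ μ {x | s < f x} + ν {y | t < g y} :=
  calc μ.prod ν {p | s + t < f p.1 + g p.2}
      ≤ μ.prod ν ({x | s < f x} ×ˢ univ ∪ univ ×ˢ {y | t < g y}) := by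
        refine measure_mono fun p hp => ?_
        by_contra h
        simp only [mem_ofPred_eq, mem_union, mem_prod, mem_univ, and_true, true_and, not_or,
          not_lt] at hp h
        exact hp.not_ge (add_le_add h.1 h.2)
    _ ≤ μ.prod ν ({x | s < f x} ×ˢ univ) + μ.prod ν (univ ×ˢ {y | t < g y}) :=
        measure_union_le _ _
    _ = μ {x | s < f x} + ν {y | t < g y} := by
        rw [Measure.prod_prod, Measure.prod_prod, measure_univ, measure_univ, mul_one, one_mul]

section Laplace

variable {b : ℝ}

lemma lap_neg (s : Set ℝ) : Lap b (-s) = Lap b s := by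
  rw [Lap, withDensity_apply', withDensity_apply']
  have := (Measure.measurePreserving_neg volume).setLIntegral_comp_preimage_emb
    (Homeomorph.neg ℝ).measurableEmbedding (fun x => ENNReal.ofReal ((2 * b)⁻¹ * exp (-|x| / b))) s
  simp only [abs_neg] at this
  exact this

lemma lap_Ioi (hb : 0 < b) {t : ℝ} (ht : 0 ≤ t) :
    Lap b (Ioi t) = ENNReal.ofReal (exp (-t / b) / 2) := by
  have hb' : -b⁻¹ < 0 := by simpa using hb
  have hint : IntegrableOn (fun x => (2 * b)⁻¹ * exp (-b⁻¹ * x)) (Ioi t) :=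
    (integrableOn_exp_mul_Ioi hb' t).const_mul _
  rw [Lap, withDensity_apply _ measurableSet_Ioi,
    setLIntegral_congr_fun measurableSet_Ioi
      (g := fun x => ENNReal.ofReal ((2 * b)⁻¹ * exp (-b⁻¹ * x)))
      fun x hx => by rw [abs_of_pos (ht.trans_lt hx)]; ring_nf,
    ← ofReal_integral_eq_lintegral_ofReal hint (ae_of_all _ fun x => by positivity),
    integral_const_mul, integral_exp_mul_Ioi hb']
  congr 1
  field_simp

lemma lap_abs_gt (hb : 0 < b) {t : ℝ} (ht : 0 ≤ t) :
    Lap b {x | t < |x|} = ENNReal.ofReal (exp (-t / b)) := by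
  have hset : {x : ℝ | t < |x|} = -Ioi t ∪ Ioi t := by
    ext x
    simp [lt_abs, lt_neg, or_comm]
  have hdisj : Disjoint (-Ioi t) (Ioi t) := by
    rw [neg_Ioi]
    exact disjoint_left.2 fun x h₁ h₂ => by simp only [mem_Iio, mem_Ioi] at h₁ h₂; linarith
  rw [hset, measure_union hdisj measurableSet_Ioi, lap_neg, lap_Ioi hb ht,
    ← ENNReal.ofReal_add (by positivity) (by positivity), add_halves]

lemma isProbabilityMeasure_lap (hb : 0 < b) : IsProbabilityMeasure (Lap b) := by
  constructor
  have hzero : Lap b {0} = 0 := withDensity_absolutelyContinuous _ _ Real.volume_singleton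
  have hcompl : ({0}ᶜ : Set ℝ) = {x | 0 < |x|} := by
    ext x
    simp [abs_pos]
  rw [← measure_add_measure_compl (measurableSet_singleton 0), hzero, zero_add, hcompl,
    lap_abs_gt hb le_rfl]
  simp

lemma lap_abs_gt_mul_log (hb : 0 < b) {η : ℝ} (hη : η ∈ Ioc (0 : ℝ) 1) :
    Lap b {x | b * log (1 / η) < |x|} = ENNReal.ofReal η := by
  have hlog : 0 ≤ log (1 / η) := log_nonneg (one_le_one_div hη.1 hη.2)
  rw [lap_abs_gt hb (mul_nonneg hb.le hlog), neg_div, mul_div_cancel_left₀ _ hb.ne', one_div,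
    log_inv, neg_neg, exp_log hη.1]

end Laplace

/-- **Theorem 2 (fairness guarantee).** With probability at least `1 − η₀ − η₁` over the
independent Laplace noises, the statistical parity gap of Algorithm 2's classifier is at
most `b₀ log(1/η₀) + b₁ log(1/η₁)`. -/
theorem algorithm2_fairness_whp
    (b₀ b₁ : ℝ) (hb₀ : 0 < b₀) (hb₁ : 0 < b₁)
    (η₀ η₁ : ℝ) (hη₀ : η₀ ∈ Set.Ioc (0:ℝ) 1) (hη₁ : η₁ ∈ Set.Ioc (0:ℝ) 1)
    (α β : ℝ) (hα : α ∈ Set.Icc (0:ℝ) 1) (hβ : β ∈ Set.Icc (0:ℝ) 1) :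
    ((Lap b₀).prod (Lap b₁))
        {p : ℝ × ℝ | G α β p.1 p.2 > b₀ * Real.log (1 / η₀) + b₁ * Real.log (1 / η₁)}
      ≤ ENNReal.ofReal (η₀ + η₁) := by
  have := isProbabilityMeasure_lap hb₀
  have := isProbabilityMeasure_lap hb₁
  calc ((Lap b₀).prod (Lap b₁))
        {p : ℝ × ℝ | G α β p.1 p.2 > b₀ * Real.log (1 / η₀) + b₁ * Real.log (1 / η₁)}
      ≤ ((Lap b₀).prod (Lap b₁))
          {p | b₀ * log (1 / η₀) + b₁ * log (1 / η₁) < |p.1| + |p.2|} :=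
        measure_mono fun p hp => lt_of_lt_of_le hp (G_le_abs_add_abs hα hβ p.1 p.2)
    _ ≤ Lap b₀ {x | b₀ * log (1 / η₀) < |x|} + Lap b₁ {y | b₁ * log (1 / η₁) < |y|} :=
        measure_prod_lt_add_le _ _ _ _
    _ = ENNReal.ofReal (η₀ + η₁) := by
        rw [lap_abs_gt_mul_log hb₀ hη₀, lap_abs_gt_mul_log hb₁ hη₁,
          ENNReal.ofReal_add hη₀.1.le hη₁.1.le]
end

section
/- Let α̃, β̃, e₀, d₀, e₁, d₁ ∈ ℝ with 0 < α̃ ≤ 1, 0 ≤ β̃ < 1 and β̃ ≤ α̃, and set α := α̃ − e₀ − d₀ and β := β̃ − e₁ − d₁. Then |α·(α̃+β̃)/(2α̃) − β − (1−β)·(α̃−β̃)/(2(1−β̃))| ≤ |e₀| + |e₁| + |d₀| + |d₁|. In particular, the statistical parity gap of Algorithm 2's classifier is bounded by the sum of the absolute estimation and noise errors. -/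
/-- Deterministic fairness inequality from the proof of Theorem 2:
the statistical parity gap of Algorithm 2's classifier is bounded by the sum of the
absolute estimation and noise errors. -/
theorem sp_gap_bound_deterministic
    (αt βt e₀ d₀ e₁ d₁ : ℝ)
    (hαt0 : 0 < αt) (hαt1 : αt ≤ 1) (hβt0 : 0 ≤ βt) (hβt1 : βt < 1) (hle : βt ≤ αt)
    (α β : ℝ) (hα : α = αt - e₀ - d₀) (hβ : β = βt - e₁ - d₁) :
    |α * (αt + βt) / (2 * αt) - β - (1 - β) * (αt - βt) / (2 * (1 - βt))| ≤
      |e₀| + |e₁| + |d₀| + |d₁| := by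
  subst hα hβ
  have hαne : (2 * αt) ≠ 0 := by positivity
  have hb : (0:ℝ) < 1 - βt := by linarith
  have hβne : (2 * (1 - βt)) ≠ 0 := by positivity
  set a := e₀ + d₀ with ha
  set b := e₁ + d₁ with hbdef
  set c₁ := (αt + βt) / (2 * αt) with hc₁
  set c₂ := 1 - (αt - βt) / (2 * (1 - βt)) with hc₂
  have hc₁0 : 0 ≤ c₁ := by positivity
  have hc₁1 : c₁ ≤ 1 := by
    rw [hc₁, div_le_one (by positivity)]; linarith
  have hratio0 : 0 ≤ (αt - βt) / (2 * (1 - βt)) := by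
    apply div_nonneg <;> linarith
  have hratio1 : (αt - βt) / (2 * (1 - βt)) ≤ 1 := by
    rw [div_le_one (by positivity)]; linarith
  have hc₂0 : 0 ≤ c₂ := by rw [hc₂]; linarith
  have hc₂1 : c₂ ≤ 1 := by rw [hc₂]; linarith
  have key : (αt - e₀ - d₀) * (αt + βt) / (2 * αt) - (βt - e₁ - d₁) -
      (1 - (βt - e₁ - d₁)) * (αt - βt) / (2 * (1 - βt)) = -a * c₁ + b * c₂ := by
    rw [hc₁, hc₂, ha, hbdef]
    field_simp
    ring
  rw [key]
  calc |(-a) * c₁ + b * c₂| ≤ |(-a) * c₁| + |b * c₂| := abs_add_le _ _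
    _ = |a| * c₁ + |b| * c₂ := by
        rw [abs_mul, abs_mul, abs_neg, abs_of_nonneg hc₁0, abs_of_nonneg hc₂0]
    _ ≤ |a| * 1 + |b| * 1 := by
        gcongr <;> assumption
    _ ≤ |e₀| + |e₁| + |d₀| + |d₁| := by
        have h1 := abs_add_le e₀ d₀
        have h2 := abs_add_le e₁ d₁
        simp only [ha, hbdef, mul_one]; linarith
end

section
/- Let α̃, β̃, e₀, d₀, e₁, d₁ ∈ ℝ with 0 < α̃ ≤ 1, 0 ≤ β̃ < 1 and β̃ ≤ α̃, and set α := α̃ − e₀ − d₀ and β := β̃ − e₁ − d₁. Then α·(α̃−β̃)/(2α̃) + (1−β)·(α̃−β̃)/(2(1−β̃)) − (|α − β| − (|e₀| + |e₁| + |d₀| + |d₁|)) ≤ (5/2)·(|e₀| + |e₁| + |d₀| + |d₁|). -/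
/-- Deterministic utility inequality from the proof of Theorem 2:
the prediction-change sum of Algorithm 2's classifier exceeds the lower bound
`|α − β| − (|e₀|+|e₁|+|d₀|+|d₁|)` on the optimal prediction-change sum by at most
`(5/2)·(|e₀|+|e₁|+|d₀|+|d₁|)`. -/
theorem utility_gap_bound_deterministic
    (αt βt e₀ d₀ e₁ d₁ : ℝ)
    (hαt0 : 0 < αt) (hαt1 : αt ≤ 1) (hβt0 : 0 ≤ βt) (hβt1 : βt < 1) (hle : βt ≤ αt)
    (α β : ℝ) (hα : α = αt - e₀ - d₀) (hβ : β = βt - e₁ - d₁) :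
    α * (αt - βt) / (2 * αt) + (1 - β) * (αt - βt) / (2 * (1 - βt)) -
        (|α - β| - (|e₀| + |e₁| + |d₀| + |d₁|)) ≤
      (5 / 2) * (|e₀| + |e₁| + |d₀| + |d₁|) := by
  have he0 := abs_nonneg e₀
  have he1 := abs_nonneg e₁
  have hd0 := abs_nonneg d₀
  have hd1 := abs_nonneg d₁
  have ae0 := neg_abs_le e₀
  have ae1 := neg_abs_le e₁
  have ad0 := neg_abs_le d₀
  have ad1 := neg_abs_le d₁
  have be0 := le_abs_self e₀
  have be1 := le_abs_self e₁
  have bd0 := le_abs_self d₀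
  have bd1 := le_abs_self d₁
  have h1 : α * (αt - βt) / (2 * αt) ≤ (αt - βt) / 2 + (|e₀| + |d₀|) / 2 := by
    rw [div_le_iff₀ (by linarith : (0:ℝ) < 2 * αt)]
    nlinarith [mul_nonneg (add_nonneg he0 hd0) hβt0]
  have h2 : (1 - β) * (αt - βt) / (2 * (1 - βt)) ≤ (αt - βt) / 2 + (|e₁| + |d₁|) / 2 := by
    rw [div_le_iff₀ (by linarith : (0:ℝ) < 2 * (1 - βt))]
    nlinarith [mul_nonneg (add_nonneg he1 hd1) (by linarith : (0:ℝ) ≤ 1 - αt)]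
  have h3 : αt - βt ≤ |α - β| + (|e₀| + |e₁| + |d₀| + |d₁|) := by
    have := le_abs_self (α - β)
    linarith
  linarith
end

section
/- Let b > 0 and q, q' ∈ ℝ, and let ν_q and ν_{q'} denote the pushforwards of Lap(b) under the maps x ↦ x + q and x ↦ x + q', respectively (the Laplace mechanism applied to query values q and q'). Then for every measurable set S ⊆ ℝ, ν_q(S) ≤ exp(|q − q'|/b)·ν_{q'}(S). In particular, if |q − q'| ≤ Δ and b = Δ/ε, the Laplace mechanism is ε-differentially private. -/
/-!
Translating `Lap b` by `q` gives the density `x ↦ (2b)⁻¹ exp(-|x - q|/b)`. By the triangle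
inequality `|x - q'| ≤ |x - q| + |q - q'|`, this density is pointwise at most `exp(|q - q'|/b)`
times the one translated by `q'`, and a pointwise bound on densities is a bound on the measures.
-/

open MeasureTheory

lemma map_add_right_withDensity {G : Type*} [MeasurableSpace G] [AddGroup G] [MeasurableAdd G]
    (μ : Measure G) [μ.IsAddRightInvariant] (f : G → ENNReal) (g : G) :
    (μ.withDensity f).map (· + g) = μ.withDensity fun x => f (x - g) := by
  ext s hs
  rw [Measure.map_apply (measurable_add_const g) hs, withDensity_apply _ hs,
    withDensity_apply _ (hs.preimage (measurable_add_const g))]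
  simpa only [add_sub_cancel_right] using
    (measurePreserving_add_right μ g).setLIntegral_comp_preimage_emb
      (measurableEmbedding_addRight g) (fun x => f (x - g)) s

lemma withDensity_le_smul_withDensity {α : Type*} [MeasurableSpace α] {μ : Measure α}
    {f g : α → ENNReal} {c : ENNReal} (hc : c ≠ ⊤) (hfg : ∀ᵐ x ∂μ, f x ≤ c * g x) :
    μ.withDensity f ≤ c • μ.withDensity g := by
  rw [← withDensity_smul' c g hc]
  exact withDensity_mono hfg

lemma laplace_density_le_exp_mul {b : ℝ} (hb : 0 < b) (x y : ℝ) :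
    (2 * b)⁻¹ * Real.exp (-|x| / b) ≤
      Real.exp (|x - y| / b) * ((2 * b)⁻¹ * Real.exp (-|y| / b)) := by
  rw [mul_left_comm, ← Real.exp_add, ← add_div]
  gcongr
  linarith [abs_sub_abs_le_abs_sub y x, abs_sub_comm x y]

theorem laplace_mechanism_dp_general (b : ℝ) (hb : 0 < b) (q q' : ℝ)
    (S : Set ℝ) :
    (Lap b).map (fun x => x + q) S ≤
      ENNReal.ofReal (Real.exp (|q - q'| / b)) * (Lap b).map (fun x => x + q') S := by
  suffices (Lap b).map (· + q) ≤ ENNReal.ofReal (Real.exp (|q - q'| / b)) • (Lap b).map (· + q')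
    from this S
  rw [Lap, map_add_right_withDensity, map_add_right_withDensity]
  refine withDensity_le_smul_withDensity ENNReal.ofReal_ne_top (ae_of_all _ fun x => ?_)
  rw [← ENNReal.ofReal_mul (Real.exp_nonneg _)]
  refine ENNReal.ofReal_le_ofReal ?_
  simpa [abs_sub_comm q q'] using laplace_density_le_exp_mul hb (x - q) (x - q')

/-- Privacy of the Laplace mechanism: the output distributions on query values `q` and
`q'` satisfy `ν_q(S) ≤ exp(|q − q'|/b) · ν_{q'}(S)` for every measurable `S`. -/
theorem laplace_mechanism_dp (b : ℝ) (hb : 0 < b) (q q' : ℝ)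
    (S : Set ℝ) (hS : MeasurableSet S) :
    (Lap b).map (fun x => x + q) S ≤
      ENNReal.ofReal (Real.exp (|q - q'| / b)) * (Lap b).map (fun x => x + q') S :=
  laplace_mechanism_dp_general b hb q q' S
end
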